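/- Let λ be a real number and set B(κ) = −(λ/6)(2e^{3iπκ} − 9e^{2iπκ} + 18e^{iπκ} − 11). Then |1 + B(κ) + B(κ)²/2| ≤ 1 holds for all κ ∈ [−1,1] if and only if λ = 0. In other words, the third-order forward (one-sided) finite-difference scheme combined with the second-order Runge–Kutta time integrator is unconditionally von Neumann unstable for the advection equation. -/

import Mathlib

/-- `Λ(κ) = −(λ/6)(2e^{3iπκ} − 9e^{2iπκ} + 18e^{iπκ} − 11)`, the amplification increment
of the third-order forward scheme at scaled wavenumber `κ` and stability number `λ`. -/
noncomputable def forward3Lambda (l κ : ℝ) : ℂ :=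
  -((l / 6 : ℝ) : ℂ) * (2 * Complex.exp (3 * Complex.I * Real.pi * κ)
    - 9 * Complex.exp (2 * Complex.I * Real.pi * κ)
    + 18 * Complex.exp (Complex.I * Real.pi * κ) - 11)

lemma exp_I_pi_third :
    Complex.exp (Complex.I * Real.pi * ((1 : ℝ)/3 : ℝ)) =
      (1/2 : ℂ) + ((Real.sqrt 3 / 2 : ℝ) : ℂ) * Complex.I := by
  have h : Complex.I * Real.pi * ((1 : ℝ)/3 : ℝ) = ((Real.pi / 3 : ℝ) : ℂ) * Complex.I := by
    push_cast; ring
  rw [h, Complex.exp_mul_I, ← Complex.ofReal_cos, ← Complex.ofReal_sin,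
    Real.cos_pi_div_three, Real.sin_pi_div_three]
  push_cast; ring

lemma lam_at_one (l : ℝ) : forward3Lambda l 1 = ((20 * l / 3 : ℝ) : ℂ) := by
  unfold forward3Lambda
  have h1 : (3 : ℂ) * Complex.I * Real.pi * (1 : ℝ) =
      3 * (((Real.pi : ℝ) : ℂ) * Complex.I) := by push_cast; ring
  have h2 : (2 : ℂ) * Complex.I * Real.pi * (1 : ℝ) =
      2 * (((Real.pi : ℝ) : ℂ) * Complex.I) := by push_cast; ring
  have h3 : Complex.I * (Real.pi : ℂ) * (1 : ℝ) = ((Real.pi : ℝ) : ℂ) * Complex.I := by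
    push_cast; ring
  rw [h1, h2, h3]
  rw [show ((3:ℂ) * ((Real.pi:ℂ) * Complex.I)) = (3:ℕ) * ((Real.pi:ℂ) * Complex.I) by norm_num,
    show ((2:ℂ) * ((Real.pi:ℂ) * Complex.I)) = (2:ℕ) * ((Real.pi:ℂ) * Complex.I) by norm_num,
    Complex.exp_nat_mul, Complex.exp_nat_mul, Complex.exp_pi_mul_I]
  push_cast; ring

lemma lam_at_third (l : ℝ) :
    forward3Lambda l (1/3 : ℝ) =
      ((-(l/12) : ℝ) : ℂ) + ((-(3 * Real.sqrt 3 / 4) * l : ℝ) : ℂ) * Complex.I := by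
  unfold forward3Lambda
  have h1 : (3 : ℂ) * Complex.I * Real.pi * ((1/3 : ℝ) : ℂ) =
      (3:ℕ) * (Complex.I * Real.pi * ((1 : ℝ)/3 : ℝ)) := by push_cast; ring
  have h2 : (2 : ℂ) * Complex.I * Real.pi * ((1/3 : ℝ) : ℂ) =
      (2:ℕ) * (Complex.I * Real.pi * ((1 : ℝ)/3 : ℝ)) := by push_cast; ring
  have h3 : Complex.I * (Real.pi : ℂ) * ((1/3 : ℝ) : ℂ) =
      Complex.I * Real.pi * ((1 : ℝ)/3 : ℝ) := by push_cast; ring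
  rw [h1, h2, h3, Complex.exp_nat_mul, Complex.exp_nat_mul, exp_I_pi_third]
  have hs : ((Real.sqrt 3 : ℝ) : ℂ) ^ 2 = 3 := by
    rw [← Complex.ofReal_pow, Real.sq_sqrt (by norm_num : (3:ℝ) ≥ 0)]; norm_num
  push_cast
  linear_combination ((l : ℂ) * (-(1/4) + (Real.sqrt 3 : ℂ) * Complex.I / 24)) * hs + ((l : ℂ) * ((Real.sqrt 3 : ℂ))^2 / 4 - (l : ℂ) * ((Real.sqrt 3 : ℂ))^3 * Complex.I / 24) * Complex.I_sq

/-- With `B(κ) = −(λ/6)(2e^{3iπκ} − 9e^{2iπκ} + 18e^{iπκ} − 11)`, the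
RK2 amplification factor `G(κ) = 1 + B(κ) + B(κ)²/2` satisfies `|G(κ)| ≤ 1` for all
`κ ∈ [−1,1]` if and only if `λ = 0`: the third-order forward scheme with the second-order
Runge–Kutta time integrator is unconditionally von Neumann unstable. -/
theorem rk2_forward3_unstable (l : ℝ) :
    (∀ κ ∈ Set.Icc (-1 : ℝ) 1,
        ‖1 + forward3Lambda l κ + forward3Lambda l κ ^ 2 / 2‖ ≤ 1)
      ↔ l = 0 := by
  constructor
  · intro h
    by_contra hl
    rcases lt_or_gt_of_ne hl with hneg | hpos
    · -- l < 0 : use κ = 1/3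
      have hm : (1/3 : ℝ) ∈ Set.Icc (-1 : ℝ) 1 := by constructor <;> norm_num
      have hb := h (1/3) hm
      rw [lam_at_third] at hb
      set s := Real.sqrt 3 with hs_def
      have hs : s ^ 2 = 3 := Real.sq_sqrt (by norm_num)
      have hG : (1 : ℂ) + (((-(l/12) : ℝ) : ℂ) + ((-(3*s/4) * l : ℝ) : ℂ) * Complex.I)
            + (((-(l/12) : ℝ) : ℂ) + ((-(3*s/4) * l : ℝ) : ℂ) * Complex.I) ^ 2 / 2
          = (((1 - l/12 - 121*l^2/144 : ℝ)) : ℂ)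
            + (((-(3*s/4)*l + s*l^2/16 : ℝ)) : ℂ) * Complex.I := by
        have hsC : ((s : ℝ) : ℂ) ^ 2 = 3 := by
          rw [← Complex.ofReal_pow, hs]; norm_num
        push_cast
        linear_combination (-((9 : ℂ) * (l : ℂ) ^ 2 / 32)) * hsC + ((9 : ℂ) * (l : ℂ) ^ 2 * ((s : ℝ) : ℂ) ^ 2 / 32) * Complex.I_sq
      rw [hG] at hb
      have habs : ‖(((1 - l/12 - 121*l^2/144 : ℝ)) : ℂ)
          + (((-(3*s/4)*l + s*l^2/16 : ℝ)) : ℂ) * Complex.I‖ ^ 2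
          = (1 - l/12 - 121*l^2/144)^2 + (-(3*s/4)*l + s*l^2/16)^2 := by
        rw [Complex.sq_norm, Complex.normSq_add_mul_I]
      have h1 : (1 - l/12 - 121*l^2/144)^2 + (-(3*s/4)*l + s*l^2/16)^2 ≤ 1 := by
        rw [← habs]
        have := norm_nonneg ((((1 - l/12 - 121*l^2/144 : ℝ)) : ℂ)
          + (((-(3*s/4)*l + s*l^2/16 : ℝ)) : ℂ) * Complex.I)
        nlinarith [hb]
      have hl3 : l^3 < 0 := by nlinarith
      nlinarith [hs, sq_nonneg l, sq_nonneg (l^2), hl3, hneg]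
    · -- l > 0 : use κ = 1
      have hm : (1 : ℝ) ∈ Set.Icc (-1 : ℝ) 1 := by constructor <;> norm_num
      have hb := h 1 hm
      rw [lam_at_one] at hb
      have hG : (1 : ℂ) + ((20 * l / 3 : ℝ) : ℂ) + ((20 * l / 3 : ℝ) : ℂ) ^ 2 / 2
          = (((1 + 20*l/3 + 200*l^2/9 : ℝ)) : ℂ) := by push_cast; ring
      rw [hG, Complex.norm_real, Real.norm_eq_abs] at hb
      have : (1 : ℝ) < 1 + 20*l/3 + 200*l^2/9 := by nlinarith
      have := le_abs_self (1 + 20*l/3 + 200*l^2/9)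
      linarith
  · intro h
    subst h
    intro κ _
    simp [forward3Lambda]
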